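/- Suppose a replica commits B via a direct two-chain: qc certifies B, qc' certifies B'' with qc'.view = qc.view + 1, and qc' was built from votes of at least 2f+1 replicas who each knew qc. Then for any subsequent view change gathering NEW-VIEW messages from any 2f+1 replicas, every AggQC contains a QC with view ≥ qc.view, so the highest QC in the AggQC extends B or equals qc. -/

import Mathlib

/-! Two quorums of size `2f+1` inside `3f+1` replicas share at least `f+1` replicas, so at least
one honest replica lies in both. It knows a QC of view `≥ v` and reports it truthfully inside the
NEW-VIEW quorum, which bounds the maximum report from below. -/

namespace Finset

variable {α : Type*} [DecidableEq α] {s t u b : Finset α}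

theorem card_add_card_le_card_add_card_inter (hs : s ⊆ u) (ht : t ⊆ u) :
    #s + #t ≤ #u + #(s ∩ t) := by
  rw [← card_union_add_card_inter]
  exact Nat.add_le_add_right (card_le_card (union_subset hs ht)) _

theorem exists_mem_inter_notMem_of_card_add_card_lt (hs : s ⊆ u) (ht : t ⊆ u)
    (hcard : #u + #b < #s + #t) : ∃ r ∈ s ∩ t, r ∉ b :=
  exists_mem_notMem_of_card_lt_card <| by
    have := card_add_card_le_card_add_card_inter hs ht
    omega

end Finset

theorem direct_two_chain_view_change_general {R : Type*}
    (f v : ℕ) (N Byz R1 R2 : Finset R)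
    (highView report : R → ℕ)
    (hN : N.card = 3 * f + 1)
    (hByzcard : Byz.card ≤ f)
    (hR1 : R1 ⊆ N) (hR1card : 2 * f + 1 ≤ R1.card)
    (hR2 : R2 ⊆ N) (hR2card : 2 * f + 1 ≤ R2.card)
    (hknow : ∀ r ∈ R1, r ∉ Byz → v ≤ highView r)
    (hreport : ∀ r ∈ N, r ∉ Byz → report r = highView r) :
    v ≤ R2.sup report := by
  classical
  obtain ⟨r, hr, hhonest⟩ :=
    Finset.exists_mem_inter_notMem_of_card_add_card_lt (b := Byz) hR1 hR2 (by omega)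
  obtain ⟨hr1, hr2⟩ := Finset.mem_inter.mp hr
  refine Finset.le_sup_of_le hr2 ?_
  rw [hreport r (hR2 hr2) hhonest]
  exact hknow r hr1 hhonest

/-- Direct two-chain commit and view change: a set `R1` of at least `2f+1`
replicas has highest-QC view at least `v` (the view of the QC certifying the
committed block `B`). Honest replicas report their true highest-QC views. Then for
any NEW-VIEW quorum `R2` of at least `2f+1` replicas (out of `n = 3f+1`, at most
`f` Byzantine), the maximum reported view over `R2` is at least `v`. -/
theorem direct_two_chain_view_change {R : Type*} [DecidableEq R]
    (f v : ℕ) (N Byz R1 R2 : Finset R)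
    (highView report : R → ℕ)
    (hN : N.card = 3 * f + 1)
    (hByz : Byz ⊆ N) (hByzcard : Byz.card ≤ f)
    (hR1 : R1 ⊆ N) (hR1card : 2 * f + 1 ≤ R1.card)
    (hR2 : R2 ⊆ N) (hR2card : 2 * f + 1 ≤ R2.card)
    (hknow : ∀ r ∈ R1, r ∉ Byz → v ≤ highView r)
    (hreport : ∀ r ∈ N, r ∉ Byz → report r = highView r) :
    v ≤ R2.sup report :=
  direct_two_chain_view_change_general f v N Byz R1 R2 highView report hN hByzcard hR1 hR1card hR2
    hR2card hknow hreport
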